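/- arXiv:1506.06265 — 5 statements merged into one kernel-verified Lean document; each statement's English description precedes it below -/
import Mathlib

section
/- If x : ℝ → ℝ² is an integral curve of the gradient field ∇h of a C¹ function h, and the limit p = lim_{t→∞} x(t) exists, then p is a critical point of h, i.e., ∇h(p) = 0. -/
/-! Let `x → p` with `x' → v`. For a continuous functional `φ`, the real function `φ ∘ x`
converges while its derivative tends to `φ v`; if `φ v > 0`, the mean value theorem makes
`φ ∘ x` grow at least linearly, which is absurd. Hence `φ v = 0` for every `φ`, so `v = 0`.
Along a gradient curve, `x' = ∇h(x) → ∇h(p)` by continuity of `∇h`. -/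

open Filter Topology

theorem tendsto_atTop_of_eventually_le_hasDerivAt {f f' : ℝ → ℝ} {c : ℝ} (hc : 0 < c)
    (hf : ∀ᶠ t in atTop, HasDerivAt f (f' t) t ∧ c ≤ f' t) :
    Tendsto f atTop atTop := by
  obtain ⟨T, hT⟩ := hf.exists_forall_of_atTop
  have hlinear : ∀ t ∈ Set.Ici T, c * (t - T) ≤ f t - f T := by
    intro t ht
    refine (convex_Ici T).mul_sub_le_image_sub_of_le_deriv
      (fun s hs => (hT s hs).1.continuousAt.continuousWithinAt)
      (fun s hs => (hT s (interior_subset hs)).1.differentiableAt.differentiableWithinAt)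
      (fun s hs => ?_) T Set.self_mem_Ici t ht ht
    rw [(hT s (interior_subset hs)).1.deriv]
    exact (hT s (interior_subset hs)).2
  have hline : Tendsto (fun t => f T + c * (t - T)) atTop atTop :=
    tendsto_atTop_add_const_left _ _
      ((tendsto_atTop_add_const_right _ _ tendsto_id).const_mul_atTop hc)
  refine tendsto_atTop_mono' atTop ?_ hline
  filter_upwards [eventually_ge_atTop T] with t ht
  linarith [hlinear t ht]

theorem nonpos_of_tendsto_of_hasDerivAt {f f' : ℝ → ℝ} {a L : ℝ}
    (hf : ∀ᶠ t in atTop, HasDerivAt f (f' t) t) (hf' : Tendsto f' atTop (𝓝 L))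
    (hlim : Tendsto f atTop (𝓝 a)) : L ≤ 0 := by
  by_contra! hL
  have hbound : ∀ᶠ t in atTop, HasDerivAt f (f' t) t ∧ L / 2 ≤ f' t :=
    hf.and (hf'.eventually (eventually_ge_nhds (half_lt_self hL)))
  exact not_tendsto_atTop_of_tendsto_nhds hlim
    (tendsto_atTop_of_eventually_le_hasDerivAt (half_pos hL) hbound)

theorem eq_zero_of_tendsto_of_hasDerivAt {E : Type*} [NormedAddCommGroup E] [NormedSpace ℝ E]
    {x x' : ℝ → E} {p v : E}
    (hx : ∀ᶠ t in atTop, HasDerivAt x (x' t) t) (hx' : Tendsto x' atTop (𝓝 v))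
    (hlim : Tendsto x atTop (𝓝 p)) : v = 0 := by
  have hdual : ∀ φ : StrongDual ℝ E, φ v ≤ 0 := fun φ =>
    nonpos_of_tendsto_of_hasDerivAt (hx.mono fun _ ht => φ.hasFDerivAt.comp_hasDerivAt _ ht)
      ((φ.continuous.tendsto v).comp hx') ((φ.continuous.tendsto p).comp hlim)
  refine SeparatingDual.eq_zero_of_forall_dual_eq_zero (R := ℝ) fun φ => ?_
  linarith [hdual φ, hdual (-φ), neg_apply φ v]

theorem stmt3_general (h : EuclideanSpace ℝ (Fin 2) → ℝ) (hh : ContDiff ℝ 1 h)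
    (x : ℝ → EuclideanSpace ℝ (Fin 2)) (p : EuclideanSpace ℝ (Fin 2))
    (hx : ∀ t : ℝ, 0 ≤ t → HasDerivAt x (gradient h (x t)) t)
    (hlim : Tendsto x atTop (nhds p)) :
    gradient h p = 0 := by
  have hgrad : Continuous (gradient h) :=
    (InnerProductSpace.toDual ℝ _).symm.continuous.comp (hh.continuous_fderiv one_ne_zero)
  exact eq_zero_of_tendsto_of_hasDerivAt ((eventually_ge_atTop 0).mono hx)
    ((hgrad.tendsto p).comp hlim) hlim

/-- If `x` is an integral curve of the gradient field `∇h` of a `C¹` function `h`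
with locally Lipschitz gradient, and `p = lim_{t→∞} x(t)` exists, then `p` is a
critical point of `h`. -/
theorem stmt3 (h : EuclideanSpace ℝ (Fin 2) → ℝ) (hh : ContDiff ℝ 1 h)
    (hlip : LocallyLipschitz (fun p => gradient h p))
    (x : ℝ → EuclideanSpace ℝ (Fin 2)) (p : EuclideanSpace ℝ (Fin 2))
    (hx : ∀ t : ℝ, 0 ≤ t → HasDerivAt x (gradient h (x t)) t)
    (hlim : Tendsto x atTop (nhds p)) :
    gradient h p = 0 :=
  stmt3_general h hh x p hx hlim
end

section
/- Funnel exit bound at a transition box: let d ≥ w > 0, a ∈ [0,w], and let β₊ satisfy arctan(1/2) − π/40 ≤ β₊ ≤ arctan(1/2). Set d̄ = (d+a)·tan(β₊ + π/20) − a·tan β₊. Then d̄ ≤ d. -/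
open Real

lemma tan_small_le {x b : ℝ} (hx0 : 0 < x) (hxb : x ≤ b) (hb : b ≤ 1)
    (h : b ≤ (2 / 11) * (1 - b ^ 2 / 2)) : Real.tan x ≤ 2 / 11 := by
  have hx1 : x ≤ 1 := hxb.trans hb
  have hcos : (1 : ℝ) - x ^ 2 / 2 ≤ Real.cos x := Real.one_sub_sq_div_two_le_cos
  have hcpos : 0 < Real.cos x := by nlinarith
  have hsin : Real.sin x < x := Real.sin_lt hx0
  rw [Real.tan_eq_sin_div_cos, div_le_iff₀ hcpos]
  nlinarith [sq_nonneg x, sq_nonneg (b - x)]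

/-- Funnel exit bound at a transition box: if `d ≥ w > 0`, `a ∈ [0,w]`, and
`arctan(1/2) − π/40 ≤ βp ≤ arctan(1/2)`, then
`(d+a)·tan(βp+π/20) − a·tan βp ≤ d`. -/
theorem stmt12 (d w a βp : ℝ) (hw : 0 < w) (hdw : w ≤ d)
    (ha0 : 0 ≤ a) (haw : a ≤ w)
    (hβl : Real.arctan (1 / 2) - Real.pi / 40 ≤ βp)
    (hβu : βp ≤ Real.arctan (1 / 2)) :
    (d + a) * Real.tan (βp + Real.pi / 20) - a * Real.tan βp ≤ d := by
  have hpi_lt : π < 3.15 := Real.pi_lt_d2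
  have hpi_gt : 3.14 < π := Real.pi_gt_d6.trans_le' (by norm_num)
  have hpi0 : 0 < π := by linarith
  -- tan (π/20) ≤ 2/11
  have ht : Real.tan (π / 20) ≤ 2 / 11 := by
    apply tan_small_le (by positivity) (b := 0.1575) (by linarith) (by norm_num)
    norm_num
  have ht0 : 0 ≤ Real.tan (π / 20) :=
    Real.tan_nonneg_of_nonneg_of_le_pi_div_two (by positivity) (by linarith)
  -- π/40 ≤ arctan (1/2)
  have htan40 : Real.tan (π / 40) ≤ 2 / 11 := by
    apply tan_small_le (by positivity) (b := 0.07875) (by linarith) (by norm_num)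
    norm_num
  have h40 : π / 40 ≤ Real.arctan (1 / 2) := by
    have := Real.arctan_tan (x := π / 40) (by linarith) (by linarith)
    calc π / 40 = Real.arctan (Real.tan (π / 40)) := this.symm
      _ ≤ Real.arctan (1 / 2) :=
        Real.arctan_strictMono.monotone (by linarith)
  -- bounds on βp
  have hβ0 : 0 ≤ βp := by linarith
  have harc_lt : Real.arctan (1 / 2) < π / 4 := by
    have := Real.arctan_strictMono (show (1:ℝ)/2 < 1 by norm_num)
    rwa [Real.arctan_one] at this
  have hβtop : βp + π / 20 < π / 2 := by linarith
  -- tan βp ≤ 1/2, tan βp ≥ 0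
  have hu : Real.tan βp ≤ 1 / 2 := by
    rcases eq_or_lt_of_le hβu with h | h
    · rw [h, Real.tan_arctan]
    · have := Real.tan_lt_tan_of_nonneg_of_lt_pi_div_two hβ0
        (Real.arctan_lt_pi_div_two _) h
      rw [Real.tan_arctan] at this; linarith
  have hu0 : 0 ≤ Real.tan βp :=
    Real.tan_nonneg_of_nonneg_of_le_pi_div_two hβ0 (by linarith)
  -- tan addition formula
  have hcβ : Real.cos βp ≠ 0 :=
    ne_of_gt (Real.cos_pos_of_mem_Ioo ⟨by linarith, by linarith⟩)
  have hcc : Real.cos (π / 20) ≠ 0 :=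
    ne_of_gt (Real.cos_pos_of_mem_Ioo ⟨by linarith, by linarith⟩)
  have hadd : Real.tan (βp + π / 20) =
      (Real.tan βp + Real.tan (π / 20)) /
        (1 - Real.tan βp * Real.tan (π / 20)) :=
    Real.tan_add' ⟨Real.cos_ne_zero_iff.mp hcβ, Real.cos_ne_zero_iff.mp hcc⟩
  set u := Real.tan βp
  set t := Real.tan (π / 20)
  have hden : 0 < 1 - u * t := by nlinarith
  have hv34 : Real.tan (βp + π / 20) ≤ 3 / 4 := by
    rw [hadd, div_le_iff₀ hden]; nlinarith
  have hvu : Real.tan (βp + π / 20) - u ≤ 1 / 4 := by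
    rw [hadd, sub_le_iff_le_add, div_le_iff₀ hden]
    nlinarith [mul_le_mul_of_nonneg_right ht (by positivity : (0:ℝ) ≤ 1 + u^2 + u/4),
      mul_nonneg (sub_nonneg.mpr hu) (by linarith : (0:ℝ) ≤ 1/2 + u),
      mul_nonneg ht0 hu0]
  have hd0 : 0 ≤ d := le_trans hw.le hdw
  have h1 := mul_le_mul_of_nonneg_left hv34 hd0
  have h2 := mul_le_mul_of_nonneg_left hvu ha0
  have hre : (d + a) * Real.tan (βp + π / 20) - a * u
      = d * Real.tan (βp + π / 20) + a * (Real.tan (βp + π / 20) - u) := by ring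
  rw [hre]
  linarith
end

section
/- Lower bound on transversal intersection angle: let p ∈ [0,½]×[0,½] (a unit-scaled box), and q on the vertical line x = 1+ϱ with ½ ≤ ϱ ≤ 1, where q = (1+ϱ, y_q) with 0 ≤ y_q ≤ 1+ϱ. Then the angle between the segment pq and the vertical direction is at least π/2 − arccos(ϱ/√(1+2ϱ+2ϱ²)) > π/10. -/
open Real Set

/-- Lower bound on transversal intersection angle: for `p ∈ [0,½]×[0,½]`,
`q = (1+ϱ, y_q)` with `0 ≤ y_q ≤ 1+ϱ` and `½ ≤ ϱ ≤ 1`, the angle between the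
segment `pq` and the vertical direction is at least
`π/2 − arccos(ϱ/√(1+2ϱ+2ϱ²)) > π/10`. -/
theorem stmt15 (ϱ : ℝ) (hϱl : 1 / 2 ≤ ϱ) (hϱu : ϱ ≤ 1)
    (p : ℝ × ℝ) (hp1 : p.1 ∈ Icc (0:ℝ) (1 / 2)) (hp2 : p.2 ∈ Icc (0:ℝ) (1 / 2))
    (yq : ℝ) (hyq : yq ∈ Icc (0:ℝ) (1 + ϱ)) :
    Real.pi / 2 - Real.arccos (ϱ / Real.sqrt (1 + 2 * ϱ + 2 * ϱ^2))
      ≤ Real.arccos (|yq - p.2| / Real.sqrt ((1 + ϱ - p.1)^2 + (yq - p.2)^2)) ∧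
    Real.pi / 10 < Real.pi / 2 - Real.arccos (ϱ / Real.sqrt (1 + 2 * ϱ + 2 * ϱ^2)) := by
  obtain ⟨hp1l, hp1r⟩ := hp1
  obtain ⟨hp2l, hp2r⟩ := hp2
  obtain ⟨hyql, hyqr⟩ := hyq
  set s : ℝ := 1 + 2 * ϱ + 2 * ϱ^2 with hs_def
  have hϱ0 : (0:ℝ) < ϱ := by linarith
  have hs : (0:ℝ) < s := by nlinarith
  have hts : (0:ℝ) < Real.sqrt s := Real.sqrt_pos.2 hs
  have hts2 : (Real.sqrt s)^2 = s := Real.sq_sqrt hs.le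
  set b : ℝ := ϱ / Real.sqrt s with hb_def
  have hb0 : 0 ≤ b := div_nonneg hϱ0.le hts.le
  -- geometry quantities
  set H : ℝ := 1 + ϱ - p.1 with hH_def
  rw [show ((yq:ℝ) - p.2)^2 = |yq - p.2|^2 from (sq_abs _).symm]
  set V : ℝ := |yq - p.2| with hV_def
  have hH : ϱ ≤ H := by simp only [hH_def]; linarith
  have hHpos : 0 < H := by linarith
  have hV0 : 0 ≤ V := abs_nonneg _
  have hV : V ≤ 1 + ϱ := by
    rw [hV_def, abs_le]; constructor <;> linarith
  have hu : (0:ℝ) < Real.sqrt (H^2 + V^2) := by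
    apply Real.sqrt_pos.2; nlinarith
  have hu2 : (Real.sqrt (H^2 + V^2))^2 = H^2 + V^2 := Real.sq_sqrt (by positivity)
  set a : ℝ := V / Real.sqrt (H^2 + V^2) with ha_def
  have ha0 : 0 ≤ a := div_nonneg hV0 hu.le
  clear_value s b H V a
  -- c = √(1 - b²) = (1+ϱ)/√s
  have hc : Real.sqrt (1 - b^2) = (1 + ϱ) / Real.sqrt s := by
    have h1 : 1 - b^2 = ((1 + ϱ) / Real.sqrt s)^2 := by
      rw [hb_def, div_pow, div_pow, hts2]
      field_simp
      rw [hs_def]; ring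
    rw [h1, Real.sqrt_sq (by positivity)]
  -- key inequality a ≤ (1+ϱ)/√s
  have hac : a ≤ (1 + ϱ) / Real.sqrt s := by
    rw [ha_def, div_le_div_iff₀ hu hts]
    have key : V^2 * s ≤ (1 + ϱ)^2 * (H^2 + V^2) := by
      have h1 : V^2 ≤ (1 + ϱ)^2 := pow_le_pow_left₀ hV0 hV 2
      have h2 : ϱ^2 ≤ H^2 := pow_le_pow_left₀ hϱ0.le hH 2
      nlinarith [mul_le_mul h1 h2 (sq_nonneg ϱ) (sq_nonneg (1+ϱ)), hs_def, sq_nonneg V]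
    calc V * Real.sqrt s = Real.sqrt (V^2 * s) := by
          rw [Real.sqrt_mul (sq_nonneg V), Real.sqrt_sq hV0]
      _ ≤ Real.sqrt ((1 + ϱ)^2 * (H^2 + V^2)) := Real.sqrt_le_sqrt key
      _ = (1 + ϱ) * Real.sqrt (H^2 + V^2) := by
          rw [Real.sqrt_mul (sq_nonneg _), Real.sqrt_sq (by positivity)]
  constructor
  · rw [Real.arccos_eq_pi_div_two_sub_arcsin, Real.arccos_eq_pi_div_two_sub_arcsin]
    have h1 : Real.arcsin b = Real.arccos (Real.sqrt (1 - b^2)) :=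
      Real.arcsin_eq_arccos hb0
    rw [h1, Real.arccos_eq_pi_div_two_sub_arcsin, hc]
    have := Real.monotone_arcsin hac
    linarith
  · -- π/10 < arcsin b
    rw [Real.arccos_eq_pi_div_two_sub_arcsin]
    have hπ : π < 3.15 := Real.pi_lt_d2
    have hπ0 : 0 < π := Real.pi_pos
    have hsqrtlt : Real.sqrt s < (200 / 63) * ϱ := by
      rw [Real.sqrt_lt' (by positivity)]
      rw [hs_def]
      nlinarith
    have hπb : π / 10 < b := by
      rw [hb_def, div_lt_div_iff₀ (by norm_num) hts]
      calc π * Real.sqrt s < 3.15 * ((200 / 63) * ϱ) :=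
            mul_lt_mul'' hπ hsqrtlt hπ0.le hts.le
        _ = ϱ * 10 := by ring
    have hsin : Real.sin (π / 10) < π / 10 := Real.sin_lt (div_pos Real.pi_pos (by norm_num))
    have h10 : π / 10 ∈ Icc (-(π/2)) (π/2) := by
      constructor <;> linarith [Real.pi_pos]
    have heq : π / 10 = Real.arcsin (Real.sin (π / 10)) := (Real.arcsin_sin h10.1 h10.2).symm
    have hb1 : b ≤ 1 := by
      rw [hb_def, div_le_one hts, Real.le_sqrt' hϱ0, hs_def]
      linarith [sq_nonneg ϱ]
    have hmono2 : Real.arcsin (Real.sin (π/10)) < Real.arcsin b := by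
      apply Real.strictMonoOn_arcsin _ _ (hsin.trans hπb)
      · exact ⟨Real.neg_one_le_sin _, Real.sin_le_one _⟩
      · exact ⟨by linarith, hb1⟩
    linarith
end

section
/- Separation of curve intersections on the box boundary: let p ∈ ℝ², let e be a vertical line at horizontal distance at least ϱd > 0 from p, and let q, r ∈ e be such that the angle ∠qpr is at least α > 0 and the segments pq, pr lie on the same side of e's perpendicular through p. Then ‖q − r‖ ≥ 2ϱd·tan(α/2). -/
/-!
Put `u = q - p`, `v = r - p`; both have first coordinate `Δ = xe - p 0`. For `θ = ∠(u, v)`,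
the planar cross product gives `‖u‖‖v‖ sin θ = |Δ| |q 1 - r 1|`, while
`‖u‖‖v‖ (1 + cos θ) = ‖u‖‖v‖ + Δ² + u 1 * v 1 ≥ 2Δ²` because `‖u‖, ‖v‖ ≥ |Δ|` and the same-side
condition makes `u 1 * v 1 ≥ 0`. As `tan (α/2) ≤ tan (θ/2) = sin θ / (1 + cos θ)`, this yields
`2Δ² tan (α/2) ≤ |Δ| |q 1 - r 1|`.
-/

open Real InnerProductGeometry
open scoped RealInnerProductSpace

theorem Real.tan_half_nonneg {α : ℝ} (hα : 0 ≤ α) (hαπ : α ≤ π) : 0 ≤ tan (α / 2) :=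
  tan_nonneg_of_nonneg_of_le_pi_div_two (by linarith) (by linarith)

theorem Real.tan_half_mul_one_add_cos_le_sin {α θ : ℝ} (hα : 0 ≤ α) (hαπ : α < π)
    (hαθ : α ≤ θ) (hθ : θ ≤ π) : tan (α / 2) * (1 + cos θ) ≤ sin θ := by
  have hcos_α : 0 < cos (α / 2) := cos_pos_of_mem_Ioo ⟨by linarith [pi_pos], by linarith⟩
  have hcos_θ : 0 ≤ cos (θ / 2) := cos_nonneg_of_mem_Icc ⟨by linarith [pi_pos], by linarith⟩
  have hsin_sub : 0 ≤ sin (θ / 2 - α / 2) :=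
    sin_nonneg_of_nonneg_of_le_pi (by linarith) (by linarith)
  have hsin_θ : sin θ = 2 * sin (θ / 2) * cos (θ / 2) := by rw [← sin_two_mul]; ring_nf
  have hcos_θ' : 1 + cos θ = 2 * cos (θ / 2) ^ 2 := by
    rw [cos_sq, show 2 * (θ / 2) = θ by ring]; ring
  rw [tan_eq_sin_div_cos, div_mul_eq_mul_div, div_le_iff₀ hcos_α, hsin_θ, hcos_θ']
  rw [sin_sub] at hsin_sub
  -- the difference of the two sides is `2 cos (θ/2) sin ((θ - α)/2)`
  nlinarith [mul_nonneg hcos_θ hsin_sub]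

namespace EuclideanSpace

theorem inner_fin_two (u v : EuclideanSpace ℝ (Fin 2)) :
    ⟪u, v⟫ = u 0 * v 0 + u 1 * v 1 := by
  simp [PiLp.inner_apply, Fin.sum_univ_two, mul_comm]

theorem dist_eq_abs_of_fst_eq {q r : EuclideanSpace ℝ (Fin 2)} (h : q 0 = r 0) :
    dist q r = |q 1 - r 1| := by
  simp [EuclideanSpace.dist_eq, Fin.sum_univ_two, h, Real.dist_eq, sqrt_sq_eq_abs]

end EuclideanSpace

open EuclideanSpace

theorem sin_angle_mul_norm_mul_norm_fin_two (u v : EuclideanSpace ℝ (Fin 2)) :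
    sin (angle u v) * (‖u‖ * ‖v‖) = |u 0 * v 1 - u 1 * v 0| := by
  rw [sin_angle_mul_norm_mul_norm, inner_fin_two, inner_fin_two, inner_fin_two,
    ← sqrt_sq_eq_abs]
  congr 1
  ring

theorem tan_half_mul_norm_mul_norm_add_inner_le {α : ℝ} (hα : 0 ≤ α) (hαπ : α < π)
    {u v : EuclideanSpace ℝ (Fin 2)} (h : α ≤ angle u v) :
    tan (α / 2) * (‖u‖ * ‖v‖ + ⟪u, v⟫) ≤ |u 0 * v 1 - u 1 * v 0| := by
  rw [← sin_angle_mul_norm_mul_norm_fin_two, ← cos_angle_mul_norm_mul_norm]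
  calc tan (α / 2) * (‖u‖ * ‖v‖ + cos (angle u v) * (‖u‖ * ‖v‖))
      = tan (α / 2) * (1 + cos (angle u v)) * (‖u‖ * ‖v‖) := by ring
    _ ≤ sin (angle u v) * (‖u‖ * ‖v‖) := by
      gcongr
      exact tan_half_mul_one_add_cos_le_sin hα hαπ h (angle_le_pi u v)

theorem two_mul_abs_mul_tan_half_le_of_fst_eq {α : ℝ} (hα : 0 ≤ α) (hαπ : α < π)
    {u v : EuclideanSpace ℝ (Fin 2)} (huv : u 0 = v 0) (hside : 0 ≤ u 1 * v 1)
    (h : α ≤ angle u v) : 2 * |u 0| * tan (α / 2) ≤ |u 1 - v 1| := by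
  have htan := tan_half_nonneg hα hαπ.le
  have hnorm : |u 0| * |u 0| ≤ ‖u‖ * ‖v‖ := by
    gcongr
    · exact PiLp.norm_apply_le u 0
    · exact huv ▸ PiLp.norm_apply_le v 0
  have hcross := tan_half_mul_norm_mul_norm_add_inner_le hα hαπ h
  rw [inner_fin_two, ← huv, show u 0 * v 1 - u 1 * u 0 = u 0 * (v 1 - u 1) by ring, abs_mul,
    abs_sub_comm] at hcross
  have hinner : 2 * (|u 0| * |u 0|) ≤ ‖u‖ * ‖v‖ + (u 0 * u 0 + u 1 * v 1) := by
    rw [abs_mul_abs_self] at hnorm ⊢; linarith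
  have hmul : |u 0| * (2 * |u 0| * tan (α / 2)) ≤ |u 0| * |u 1 - v 1| := by
    calc |u 0| * (2 * |u 0| * tan (α / 2)) = tan (α / 2) * (2 * (|u 0| * |u 0|)) := by ring
      _ ≤ _ := (mul_le_mul_of_nonneg_left hinner htan).trans hcross
  rcases (abs_nonneg (u 0)).eq_or_lt with h0 | hpos
  · rw [← h0]; simp
  · exact le_of_mul_le_mul_left hmul hpos

theorem stmt16_general (ϱ d α : ℝ) (hα : 0 < α) (hαπ : α < Real.pi)
    (p q r : EuclideanSpace ℝ (Fin 2)) (xe : ℝ)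
    (hq : q 0 = xe) (hr : r 0 = xe)
    (hdist : ϱ * d ≤ |xe - p 0|)
    (hside : 0 ≤ (q 1 - p 1) * (r 1 - p 1))
    (hangle : α ≤ EuclideanGeometry.angle q p r) :
    2 * ϱ * d * Real.tan (α / 2) ≤ dist q r := by
  have htan := tan_half_nonneg hα.le hαπ.le
  have hsep := two_mul_abs_mul_tan_half_le_of_fst_eq (u := q - p) (v := r - p) hα.le hαπ
    (by simp [hq, hr]) (by simpa using hside) hangle
  simp only [PiLp.sub_apply, hq, sub_sub_sub_cancel_right] at hsep
  rw [dist_eq_abs_of_fst_eq (hq.trans hr.symm)]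
  calc 2 * ϱ * d * tan (α / 2) = 2 * (ϱ * d) * tan (α / 2) := by ring
    _ ≤ 2 * |xe - p 0| * tan (α / 2) := by gcongr
    _ ≤ |q 1 - r 1| := hsep

/-- Separation of curve intersections on the box boundary: if `q`, `r` lie on a
vertical line at horizontal distance at least `ϱd > 0` from `p`, the angle `∠ q p r`
is at least `α > 0`, and the segments `pq`, `pr` lie on the same side of the
horizontal line through `p`, then `‖q − r‖ ≥ 2ϱd·tan(α/2)`. -/
theorem stmt16 (ϱ d α : ℝ) (hϱd : 0 < ϱ * d) (hα : 0 < α) (hαπ : α < Real.pi)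
    (p q r : EuclideanSpace ℝ (Fin 2)) (xe : ℝ)
    (hq : q 0 = xe) (hr : r 0 = xe)
    (hdist : ϱ * d ≤ |xe - p 0|)
    (hside : 0 ≤ (q 1 - p 1) * (r 1 - p 1))
    (hangle : α ≤ EuclideanGeometry.angle q p r) :
    2 * ϱ * d * Real.tan (α / 2) ≤ dist q r :=
  stmt16_general ϱ d α hα hαπ p q r xe hq hr hdist hside hangle
end

section
/- Nonvanishing of the wedge-boundary gradient: under ‖HV^s‖ ≥ (|λ_s|/a)‖V^u‖ and ‖HV^u‖ ≤ aλ_u‖V^u‖ at every point (Condition I), and sin β ≤ (sin ω₁/(4a²√2))·|λ_s/λ_u| with 0 < β < π/4, a > 1, ω₁ ∈ (0,π/4), one has ‖∇ψ^u_β‖ = ‖cos β·HV^s + sin β·HV^u‖ ≥ (|λ_s|/(2a√2))·‖V^u‖ > 0. -/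
open Real

/-! The boundary gradient `cos β • HV^s + sin β • HV^u` is a small tilt of `HV^s`: its norm is
at least `cos β ‖HV^s‖ - sin β ‖HV^u‖`. For `β < π/4` the first term is at least `‖HV^s‖ / √2`,
while the smallness of `sin β` makes the second at most a quarter of the lower bound
`|λ_s| ‖V^u‖ / (a√2)` on the first, leaving `3/4` of it, more than the claimed half. -/

theorem mul_norm_sub_mul_norm_le_norm_smul_add_smul {E : Type*} [SeminormedAddCommGroup E]
    [NormedSpace ℝ E] {c s : ℝ} (hc : 0 ≤ c) (hs : 0 ≤ s) (x y : E) :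
    c * ‖x‖ - s * ‖y‖ ≤ ‖c • x + s • y‖ := by
  simpa only [norm_smul, norm_of_nonneg hc, norm_of_nonneg hs] using
    norm_sub_le_norm_add (c • x) (s • y)

theorem Real.sqrt_two_div_two_le_cos {x : ℝ} (hx₀ : 0 ≤ x) (hx : x ≤ π / 4) :
    √2 / 2 ≤ cos x := by
  rw [← cos_pi_div_four]
  exact cos_le_cos_of_nonneg_of_le_pi hx₀ (by linarith [pi_pos]) hx

theorem stmt19_general (a lu ls β ω₁ : ℝ) (ha : 1 < a) (hls : ls < 0) (hlu : 0 < lu)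
    (hβ : 0 < β) (hβ' : β < Real.pi / 4)
    (Vu HVs HVu : EuclideanSpace ℝ (Fin 2)) (hVu : Vu ≠ 0)
    (h1 : |ls| / a * ‖Vu‖ ≤ ‖HVs‖)
    (h2 : ‖HVu‖ ≤ a * lu * ‖Vu‖)
    (h3 : Real.sin β ≤ Real.sin ω₁ / (4 * a^2 * Real.sqrt 2) * |ls / lu|) :
    |ls| / (2 * a * Real.sqrt 2) * ‖Vu‖
        ≤ ‖Real.cos β • HVs + Real.sin β • HVu‖ ∧
    0 < ‖Real.cos β • HVs + Real.sin β • HVu‖ := by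
  have ha₀ : 0 < a := by linarith
  have hls₀ : 0 < |ls| := abs_pos.mpr hls.ne
  have hcos : √2 / 2 ≤ cos β := sqrt_two_div_two_le_cos hβ.le hβ'.le
  have hcos₀ : 0 ≤ cos β := hcos.trans' (by positivity)
  have hsin₀ : 0 ≤ sin β := sin_nonneg_of_nonneg_of_le_pi hβ.le (by linarith [pi_pos])
  have hsin : sin β ≤ |ls / lu| / (4 * a ^ 2 * √2) :=
    calc sin β ≤ sin ω₁ * (|ls / lu| / (4 * a ^ 2 * √2)) := h3.trans_eq (by ring)
      _ ≤ |ls / lu| / (4 * a ^ 2 * √2) := mul_le_of_le_one_left (by positivity) (sin_le_one _)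
  have hsmall : sin β * ‖HVu‖ ≤ |ls| / (4 * a * √2) * ‖Vu‖ :=
    calc sin β * ‖HVu‖ ≤ |ls / lu| / (4 * a ^ 2 * √2) * (a * lu * ‖Vu‖) :=
          mul_le_mul hsin h2 (norm_nonneg _) (by positivity)
      _ = |ls| / (4 * a * √2) * ‖Vu‖ := by
          rw [abs_div, abs_of_pos hlu]; field_simp
  have hbound : |ls| / (2 * a * √2) * ‖Vu‖ ≤ ‖cos β • HVs + sin β • HVu‖ :=
    calc |ls| / (2 * a * √2) * ‖Vu‖
        ≤ √2 / 2 * (|ls| / a * ‖Vu‖) - |ls| / (4 * a * √2) * ‖Vu‖ := by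
          have hsq : √2 ^ 2 = 2 := sq_sqrt zero_le_two
          rw [← sub_nonneg]
          field_simp
          rw [hsq]
          norm_num
          positivity
      _ ≤ cos β * ‖HVs‖ - sin β * ‖HVu‖ :=
          sub_le_sub (mul_le_mul hcos h1 (by positivity) hcos₀) hsmall
      _ ≤ ‖cos β • HVs + sin β • HVu‖ :=
          mul_norm_sub_mul_norm_le_norm_smul_add_smul hcos₀ hsin₀ HVs HVu
  exact ⟨hbound, lt_of_lt_of_le (by positivity) hbound⟩

/-- Nonvanishing of the wedge-boundary gradient: under Condition I bounds
`‖HV^s‖ ≥ (|λ_s|/a)‖V^u‖`, `‖HV^u‖ ≤ aλ_u‖V^u‖` and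
`sin β ≤ (sin ω₁/(4a²√2))·|λ_s/λ_u|` with `0 < β < π/4`, `a > 1`,
`ω₁ ∈ (0,π/4)`, one has
`‖cos β·HV^s + sin β·HV^u‖ ≥ (|λ_s|/(2a√2))·‖V^u‖ > 0`. -/
theorem stmt19 (a lu ls β ω₁ : ℝ) (ha : 1 < a) (hls : ls < 0) (hlu : 0 < lu)
    (hβ : 0 < β) (hβ' : β < Real.pi / 4) (hω : 0 < ω₁) (hω' : ω₁ < Real.pi / 4)
    (Vu HVs HVu : EuclideanSpace ℝ (Fin 2)) (hVu : Vu ≠ 0)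
    (h1 : |ls| / a * ‖Vu‖ ≤ ‖HVs‖)
    (h2 : ‖HVu‖ ≤ a * lu * ‖Vu‖)
    (h3 : Real.sin β ≤ Real.sin ω₁ / (4 * a^2 * Real.sqrt 2) * |ls / lu|) :
    |ls| / (2 * a * Real.sqrt 2) * ‖Vu‖
        ≤ ‖Real.cos β • HVs + Real.sin β • HVu‖ ∧
    0 < ‖Real.cos β • HVs + Real.sin β • HVu‖ :=
  stmt19_general a lu ls β ω₁ ha hls hlu hβ hβ' Vu HVs HVu hVu h1 h2 h3
end
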